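/- arXiv:1702.00812 — 9 statements merged into one kernel-verified Lean document; each statement's English description precedes it below -/
import Mathlib

section
/- Let H be a real Hilbert space and U : H → H an operator with a nonempty fixed point set, and let α ∈ (0,2]. Then U is a cutter (i.e., ⟨z − Ux, x − Ux⟩ ≤ 0 for all x ∈ H and z ∈ Fix U) if and only if the relaxation Id + α(U − Id) is (2−α)/α-strongly quasi-nonexpansive (i.e., ‖(Id+α(U−Id))x − z‖² ≤ ‖x − z‖² − ((2−α)/α)‖(Id+α(U−Id))x − x‖² for all x ∈ H, z ∈ Fix U). -/
open RealInnerProductSpace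

theorem cutter_iff_relaxation_sqne
    {H : Type*} [NormedAddCommGroup H] [InnerProductSpace ℝ H]
    (U : H → H) (hfix : ∃ z, U z = z) (α : ℝ) (hα : 0 < α) (hα2 : α ≤ 2) :
    (∀ x z, U z = z → ⟪z - U x, x - U x⟫ ≤ 0) ↔
    (∀ x z, U z = z →
      ‖(x + α • (U x - x)) - z‖ ^ 2 ≤
        ‖x - z‖ ^ 2 - ((2 - α) / α) * ‖(x + α • (U x - x)) - x‖ ^ 2) := by
  have hα0 : α ≠ 0 := ne_of_gt hα
  have key : ∀ x z : H, ⟪z - U x, x - U x⟫ = ⟪x - z, U x - x⟫ + ‖U x - x‖ ^ 2 := by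
    intro x z
    have h1 : ‖U x - x‖ ^ 2 = ⟪U x - x, U x - x⟫ := (real_inner_self_eq_norm_sq _).symm
    have h2 : z - U x = (z - x) - (U x - x) := by abel
    have h3 : x - U x = -(U x - x) := by abel
    rw [h1, h2, h3, inner_neg_right, inner_sub_left, inner_sub_left,
      show (⟪x - z, U x - x⟫ : ℝ) = ⟪x, U x - x⟫ - ⟪z, U x - x⟫ from inner_sub_left _ _ _]
    ring
  have exp1 : ∀ x z : H, ‖(x + α • (U x - x)) - z‖ ^ 2 =
      ‖x - z‖ ^ 2 + 2 * α * ⟪x - z, U x - x⟫ + α ^ 2 * ‖U x - x‖ ^ 2 := by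
    intro x z
    have h2 : (x + α • (U x - x)) - z = (x - z) + α • (U x - x) := by abel
    rw [h2, norm_add_sq_real, real_inner_smul_right, norm_smul, mul_pow,
      Real.norm_eq_abs, sq_abs]
    ring
  have exp2 : ∀ x : H, ‖(x + α • (U x - x)) - x‖ ^ 2 = α ^ 2 * ‖U x - x‖ ^ 2 := by
    intro x
    have h2 : (x + α • (U x - x)) - x = α • (U x - x) := by abel
    rw [h2, norm_smul, mul_pow, Real.norm_eq_abs, sq_abs]
  have hfrac : (2 - α) / α * α ^ 2 = (2 - α) * α := by field_simp
  constructor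
  · intro h x z hz
    have hc := h x z hz
    rw [key] at hc
    rw [exp1, exp2, ← mul_assoc, hfrac]
    nlinarith [sq_nonneg ‖U x - x‖, hα.le]
  · intro h x z hz
    have hc := h x z hz
    rw [exp1, exp2, ← mul_assoc, hfrac] at hc
    rw [key]
    nlinarith [sq_nonneg ‖U x - x‖]
end

section
/- Let H be a real Hilbert space and U : H → H an operator with a nonempty fixed point set, and let ρ ≥ 0. Then U is ρ-strongly quasi-nonexpansive if and only if the relaxation Id + ((1+ρ)/2)(U − Id) is a cutter. -/
open RealInnerProductSpace

theorem sqne_iff_relaxation_cutter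
    {H : Type*} [NormedAddCommGroup H] [InnerProductSpace ℝ H]
    (U : H → H) (hfix : ∃ z, U z = z) (ρ : ℝ) (hρ : 0 ≤ ρ) :
    (∀ x z, U z = z → ‖U x - z‖ ^ 2 ≤ ‖x - z‖ ^ 2 - ρ * ‖U x - x‖ ^ 2) ↔
    (∀ x z, U z = z →
      ⟪z - (x + ((1 + ρ) / 2) • (U x - x)), x - (x + ((1 + ρ) / 2) • (U x - x))⟫ ≤ 0) := by
  have key : ∀ x z : H, ‖U x - z‖^2 = ‖x - z‖^2 + 2*⟪x - z, U x - x⟫ + ‖U x - x‖^2 := by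
    intro x z
    have h : U x - z = (x - z) + (U x - x) := by abel
    rw [h, norm_add_sq_real]
  have key2 : ∀ x z : H,
      ⟪z - (x + ((1 + ρ) / 2) • (U x - x)), x - (x + ((1 + ρ) / 2) • (U x - x))⟫ =
        ((1+ρ)/2)*⟪x - z, U x - x⟫ + ((1+ρ)/2)^2*‖U x - x‖^2 := by
    intro x z
    have h1 : z - (x + ((1 + ρ) / 2) • (U x - x)) =
        (z - x) - ((1 + ρ) / 2) • (U x - x) := by abel
    have h2 : x - (x + ((1 + ρ) / 2) • (U x - x)) =
        -(((1 + ρ) / 2) • (U x - x)) := by abel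
    set v := U x - x with hv
    rw [h1, h2, inner_neg_right, inner_sub_left, real_inner_smul_left,
      real_inner_smul_right, real_inner_smul_right, real_inner_self_eq_norm_sq]
    have h3 : ⟪z - x, v⟫ = -⟪x - z, v⟫ := by
      rw [show z - x = -(x - z) by abel, inner_neg_left]
    rw [h3]; ring
  constructor
  · intro h x z hz
    have h1 := h x z hz
    rw [key x z] at h1
    rw [key2 x z]
    nlinarith [h1, sq_nonneg ‖U x - x‖]
  · intro h x z hz
    have h1 := h x z hz
    rw [key2 x z] at h1
    rw [key x z]
    nlinarith [h1, sq_nonneg ‖U x - x‖]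
end

section
/- Let H be a real Hilbert space and U : H → H with Fix U ≠ ∅. Then U is quasi-nonexpansive (‖Ux − z‖ ≤ ‖x − z‖ for all x ∈ H, z ∈ Fix U) if and only if (Id + U)/2 is a cutter. -/
open RealInnerProductSpace

theorem qne_iff_half_relaxation_cutter
    {H : Type*} [NormedAddCommGroup H] [InnerProductSpace ℝ H]
    (U : H → H) (hfix : ∃ z, U z = z) :
    (∀ x z, U z = z → ‖U x - z‖ ≤ ‖x - z‖) ↔
    (∀ x z, U z = z →
      ⟪z - (1 / 2 : ℝ) • (x + U x), x - (1 / 2 : ℝ) • (x + U x)⟫ ≤ 0) := by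
  have key : ∀ x z : H,
      ⟪z - (1 / 2 : ℝ) • (x + U x), x - (1 / 2 : ℝ) • (x + U x)⟫ =
        (‖U x - z‖ ^ 2 - ‖x - z‖ ^ 2) / 4 := by
    intro x z
    have h1 : ‖U x - z‖ ^ 2 = ⟪U x - z, U x - z⟫ :=
      (real_inner_self_eq_norm_sq _).symm
    have h2 : ‖x - z‖ ^ 2 = ⟪x - z, x - z⟫ :=
      (real_inner_self_eq_norm_sq _).symm
    rw [h1, h2]
    simp only [inner_sub_left, inner_sub_right, inner_smul_left, inner_smul_right,
      inner_add_left, inner_add_right, RCLike.ofReal_real_eq_id, id_eq, conj_trivial]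
    rw [real_inner_comm z x, real_inner_comm z (U x), real_inner_comm x (U x)]
    ring
  constructor
  · intro h x z hz
    rw [key x z]
    have := h x z hz
    nlinarith [norm_nonneg (U x - z), norm_nonneg (x - z)]
  · intro h x z hz
    have := h x z hz
    rw [key x z] at this
    have h4 : ‖U x - z‖ ^ 2 ≤ ‖x - z‖ ^ 2 := by linarith
    nlinarith [norm_nonneg (U x - z), norm_nonneg (x - z)]
end

section
/- Let U_i : H → H, i = 1,…,m, be ρ_i-strongly quasi-nonexpansive operators on a real Hilbert space with ⋂_i Fix U_i ≠ ∅, and let ρ := min_i ρ_i > 0. Then the composition U := U_m ∘ ⋯ ∘ U_1 is (ρ/m)-strongly quasi-nonexpansive, and Fix U = ⋂_i Fix U_i. -/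
/-!
Follow the orbit `x = y₀, y₁ = U₁ y₀, …, yₘ = U x` of a point under the successive operators.
For a common fixed point `z`, the defining inequalities telescope to
`‖U x - z‖² + ρ ∑ ‖yₖ₊₁ - yₖ‖² ≤ ‖x - z‖²`, while the triangle and Cauchy–Schwarz inequalities give
`‖U x - x‖² ≤ m ∑ ‖yₖ₊₁ - yₖ‖²`; together they yield the constant `ρ / m`. Applied with `x` a fixed
point of `U`, the telescoped inequality forces every step `yₖ₊₁ - yₖ` to vanish, so the fixed
points of `U` are exactly the common fixed points.
-/

open Function

/-- Only the inequality of the definition; the requirement `Fix V ≠ ∅` is carried separately. -/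
def IsStronglyQuasiNonexpansive {H : Type*} [NormedAddCommGroup H] (ρ : ℝ) (V : H → H) : Prop :=
  ∀ x z, IsFixedPt V z → ‖V x - z‖ ^ 2 ≤ ‖x - z‖ ^ 2 - ρ * ‖V x - x‖ ^ 2

theorem IsStronglyQuasiNonexpansive.mono {H : Type*} [NormedAddCommGroup H] {ρ ρ' : ℝ}
    {V : H → H} (hV : IsStronglyQuasiNonexpansive ρ V) (hρ : ρ' ≤ ρ) :
    IsStronglyQuasiNonexpansive ρ' V := fun x z hz =>
  (hV x z hz).trans (by gcongr)

/-- `seqComp [f₁, …, fₘ] = fₘ ∘ ⋯ ∘ f₁`. -/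
def seqComp {α : Type*} (L : List (α → α)) (x : α) : α :=
  L.foldl (fun y f => f y) x

section SeqComp

variable {α : Type*}

@[simp]
theorem seqComp_nil (x : α) : seqComp [] x = x := rfl

@[simp]
theorem seqComp_cons (f : α → α) (L : List (α → α)) (x : α) :
    seqComp (f :: L) x = seqComp L (f x) := rfl

theorem isFixedPt_seqComp {L : List (α → α)} {z : α} (hz : ∀ f ∈ L, IsFixedPt f z) :
    IsFixedPt (seqComp L) z := by
  induction L with
  | nil => rfl
  | cons f L ih =>
    simp only [List.forall_mem_cons] at hz
    simpa [IsFixedPt, hz.1.eq] using ih hz.2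

end SeqComp

section SumSqSteps

variable {H : Type*} [NormedAddCommGroup H]

/-- `∑ₖ ‖yₖ₊₁ - yₖ‖²` along the orbit `yₖ` of `x` under the successive maps of `L`. -/
def sumSqSteps : List (H → H) → H → ℝ
  | [], _ => 0
  | f :: L, x => ‖f x - x‖ ^ 2 + sumSqSteps L (f x)

theorem sumSqSteps_nonneg (L : List (H → H)) (x : H) : 0 ≤ sumSqSteps L x := by
  induction L generalizing x with
  | nil => exact le_rfl
  | cons f L ih => exact add_nonneg (sq_nonneg _) (ih _)

theorem forall_isFixedPt_of_sumSqSteps_eq_zero {L : List (H → H)} {x : H}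
    (h : sumSqSteps L x = 0) : ∀ f ∈ L, IsFixedPt f x := by
  induction L with
  | nil => simp
  | cons f L ih =>
    obtain ⟨hf, hL⟩ := (add_eq_zero_iff_of_nonneg (sq_nonneg _) (sumSqSteps_nonneg L _)).1 h
    have hfx : IsFixedPt f x := sub_eq_zero.1 (norm_eq_zero.1 (pow_eq_zero_iff two_ne_zero |>.1 hf))
    rw [hfx.eq] at hL
    exact List.forall_mem_cons.2 ⟨hfx, ih hL⟩

theorem sq_norm_sub_add_mul_sumSqSteps_le {ρ : ℝ} {L : List (H → H)}
    (hL : ∀ V ∈ L, IsStronglyQuasiNonexpansive ρ V) {z : H} (hz : ∀ V ∈ L, IsFixedPt V z)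
    (x : H) : ‖seqComp L x - z‖ ^ 2 + ρ * sumSqSteps L x ≤ ‖x - z‖ ^ 2 := by
  induction L generalizing x with
  | nil => simp [sumSqSteps]
  | cons f L ih =>
    simp only [List.forall_mem_cons] at hL hz
    have hrest := ih hL.2 hz.2 (f x)
    have hf := hL.1 x z hz.1
    simp only [seqComp_cons, sumSqSteps]
    linarith

theorem add_sq_le_succ_mul {a d E n : ℝ} (hn : 0 ≤ n) (hE : 0 ≤ E)
    (h : d ^ 2 ≤ n * E) : (a + d) ^ 2 ≤ (n + 1) * (a ^ 2 + E) := by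
  rcases hn.eq_or_lt with rfl | hn
  · nlinarith
  · refine le_of_mul_le_mul_left ?_ hn
    nlinarith [sq_nonneg (n * a - d), mul_le_mul_of_nonneg_left h hn.le]

/-- Triangle inequality along the orbit, followed by Cauchy–Schwarz. -/
theorem sq_norm_seqComp_sub_le (L : List (H → H)) (x : H) :
    ‖seqComp L x - x‖ ^ 2 ≤ L.length * sumSqSteps L x := by
  induction L generalizing x with
  | nil => simp
  | cons f L ih =>
    have htri : ‖seqComp L (f x) - x‖ ≤ ‖f x - x‖ + ‖seqComp L (f x) - f x‖ := by
      simpa [add_comm] using norm_sub_le_norm_sub_add_norm_sub (seqComp L (f x)) (f x) x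
    calc ‖seqComp (f :: L) x - x‖ ^ 2
        ≤ (‖f x - x‖ + ‖seqComp L (f x) - f x‖) ^ 2 := by
          simp only [seqComp_cons]; gcongr
      _ ≤ (L.length + 1) * (‖f x - x‖ ^ 2 + sumSqSteps L (f x)) :=
          add_sq_le_succ_mul (Nat.cast_nonneg _) (sumSqSteps_nonneg _ _) (ih _)
      _ = (f :: L).length * sumSqSteps (f :: L) x := by simp [sumSqSteps]

end SumSqSteps

section Composition

variable {H : Type*} [NormedAddCommGroup H] {ρ : ℝ} {L : List (H → H)}

theorem fixedPoints_seqComp (hL : ∀ V ∈ L, IsStronglyQuasiNonexpansive ρ V) (hρ : 0 < ρ)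
    (hfix : ∃ w, ∀ V ∈ L, IsFixedPt V w) :
    fixedPoints (seqComp L) = {z | ∀ V ∈ L, IsFixedPt V z} := by
  obtain ⟨w, hw⟩ := hfix
  ext z
  refine ⟨fun hz => forall_isFixedPt_of_sumSqSteps_eq_zero ?_, isFixedPt_seqComp⟩
  have key := sq_norm_sub_add_mul_sumSqSteps_le hL hw z
  rw [hz.eq] at key
  exact le_antisymm (nonpos_of_mul_nonpos_right (by linarith) hρ) (sumSqSteps_nonneg L z)

theorem isStronglyQuasiNonexpansive_seqComp (hL : ∀ V ∈ L, IsStronglyQuasiNonexpansive ρ V)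
    (hρ : 0 < ρ) (hfix : ∃ w, ∀ V ∈ L, IsFixedPt V w) :
    IsStronglyQuasiNonexpansive (ρ / L.length) (seqComp L) := by
  intro x z hz
  have hzL : z ∈ {z | ∀ V ∈ L, IsFixedPt V z} := fixedPoints_seqComp hL hρ hfix ▸ hz
  have key := sq_norm_sub_add_mul_sumSqSteps_le hL hzL x
  have hsteps : ρ / L.length * ‖seqComp L x - x‖ ^ 2 ≤ ρ * sumSqSteps L x := by
    calc ρ / L.length * ‖seqComp L x - x‖ ^ 2
        ≤ ρ / L.length * (L.length * sumSqSteps L x) := by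
          gcongr; exact sq_norm_seqComp_sub_le L x
      _ ≤ ρ * sumSqSteps L x := by
          rcases (Nat.cast_nonneg (α := ℝ) L.length).eq_or_lt with h0 | hpos
          · simpa [← h0] using mul_nonneg hρ.le (sumSqSteps_nonneg L x)
          · rw [← mul_assoc, div_mul_cancel₀ _ hpos.ne']
  linarith

end Composition

theorem composition_sqne_general
    {H : Type*} [NormedAddCommGroup H]
    {m : ℕ} [NeZero m] (U : Fin m → H → H) (ρ : Fin m → ℝ)
    (hsqne : ∀ i x z, U i z = z →
      ‖U i x - z‖ ^ 2 ≤ ‖x - z‖ ^ 2 - ρ i * ‖U i x - x‖ ^ 2)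
    (hfix : ∃ z, ∀ i, U i z = z)
    (ρmin : ℝ) (hρmin : ρmin = Finset.univ.inf' Finset.univ_nonempty ρ)
    (hρpos : 0 < ρmin)
    (T : H → H) (hT : ∀ x, T x = (List.ofFn U).foldl (fun y f => f y) x) :
    (∀ x z, T z = z →
      ‖T x - z‖ ^ 2 ≤ ‖x - z‖ ^ 2 - (ρmin / m) * ‖T x - x‖ ^ 2) ∧
    {z | T z = z} = ⋂ i, {z | U i z = z} := by
  obtain rfl : T = seqComp (List.ofFn U) := funext hT
  have hU : ∀ V ∈ List.ofFn U, IsStronglyQuasiNonexpansive ρmin V :=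
    List.forall_mem_ofFn_iff.2 fun i =>
      IsStronglyQuasiNonexpansive.mono (hsqne i) (hρmin ▸ Finset.inf'_le _ (Finset.mem_univ i))
  have hfixL : ∃ w, ∀ V ∈ List.ofFn U, IsFixedPt V w :=
    hfix.imp fun _ hw => List.forall_mem_ofFn_iff.2 hw
  refine ⟨?_, ?_⟩
  · have h := isStronglyQuasiNonexpansive_seqComp hU hρpos hfixL
    rwa [List.length_ofFn] at h
  · ext z
    simpa [List.forall_mem_ofFn_iff, IsFixedPt] using
      Set.ext_iff.1 (fixedPoints_seqComp hU hρpos hfixL) z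

theorem composition_sqne
    {H : Type*} [NormedAddCommGroup H] [InnerProductSpace ℝ H]
    {m : ℕ} [NeZero m] (U : Fin m → H → H) (ρ : Fin m → ℝ)
    (hsqne : ∀ i x z, U i z = z →
      ‖U i x - z‖ ^ 2 ≤ ‖x - z‖ ^ 2 - ρ i * ‖U i x - x‖ ^ 2)
    (hfix : ∃ z, ∀ i, U i z = z)
    (ρmin : ℝ) (hρmin : ρmin = Finset.univ.inf' Finset.univ_nonempty ρ)
    (hρpos : 0 < ρmin)
    (T : H → H) (hT : ∀ x, T x = (List.ofFn U).foldl (fun y f => f y) x) :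
    (∀ x z, T z = z →
      ‖T x - z‖ ^ 2 ≤ ‖x - z‖ ^ 2 - (ρmin / m) * ‖T x - x‖ ^ 2) ∧
    {z | T z = z} = ⋂ i, {z | U i z = z} :=
  composition_sqne_general U ρ hsqne hfix ρmin hρmin hρpos T hT
end

section
/- Let U : H → H be a quasi-nonexpansive operator on a real Hilbert space. If U is boundedly regular, then U is weakly regular, i.e., U − Id is demi-closed at 0: whenever x^k ⇀ x weakly and Ux^k − x^k → 0 strongly, we have x ∈ Fix U. -/
open RealInnerProductSpace Filter

-- auxiliary identity: for w = t•u + (1-t)•v,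
-- ‖y - w‖² = t‖y-u‖² + (1-t)‖y-v‖² - t(1-t)‖u-v‖²
lemma aux_convex_identity {H : Type*} [NormedAddCommGroup H] [InnerProductSpace ℝ H]
    (u v y : H) (t : ℝ) :
    ‖y - (t • u + (1 - t) • v)‖ ^ 2 =
      t * ‖y - u‖ ^ 2 + (1 - t) * ‖y - v‖ ^ 2 - t * (1 - t) * ‖u - v‖ ^ 2 := by
  have h : ∀ a b : H, ‖a - b‖ ^ 2 = ‖a‖ ^ 2 - 2 * ⟪a, b⟫ + ‖b‖ ^ 2 := by
    intro a b
    rw [← real_inner_self_eq_norm_sq, ← real_inner_self_eq_norm_sq, ← real_inner_self_eq_norm_sq,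
      inner_sub_sub_self, real_inner_comm b a]
    ring
  simp only [h, norm_add_sq_real, norm_smul, inner_add_right, real_inner_smul_right,
    inner_smul_left, real_inner_smul_right, RCLike.conj_to_real, Real.norm_eq_abs]
  have h2 : |t| ^ 2 = t ^ 2 := sq_abs t
  have h3 : |1 - t| ^ 2 = (1 - t) ^ 2 := sq_abs (1 - t)
  have h4 : ⟪v, u⟫ = ⟪u, v⟫ := real_inner_comm u v
  have h5 : ⟪u, y⟫ = ⟪y, u⟫ := real_inner_comm y u
  have h6 : ⟪v, y⟫ = ⟪y, v⟫ := real_inner_comm y v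
  ring_nf
  nlinarith [sq_abs t, sq_abs (1 - t), real_inner_comm u v]

theorem boundedlyRegular_implies_weaklyRegular
    {H : Type*} [NormedAddCommGroup H] [InnerProductSpace ℝ H] [CompleteSpace H]
    (U : H → H) (hfix : ∃ z, U z = z)
    (hqne : ∀ x z, U z = z → ‖U x - z‖ ≤ ‖x - z‖)
    (hBR : ∀ x : ℕ → H, Bornology.IsBounded (Set.range x) →
      Tendsto (fun k => ‖U (x k) - x k‖) atTop (nhds 0) →
      Tendsto (fun k => Metric.infDist (x k) {z | U z = z}) atTop (nhds 0)) :
    ∀ (x : ℕ → H) (p : H),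
      (∀ y : H, Tendsto (fun k => ⟪y, x k⟫) atTop (nhds ⟪y, p⟫)) →
      Tendsto (fun k => U (x k) - x k) atTop (nhds 0) →
      U p = p := by
  intro x p hweak hres
  set S : Set H := {z | U z = z} with hS
  -- S is nonempty
  have hSne : S.Nonempty := hfix
  -- S is closed
  have hSclosed : IsClosed S := by
    rw [← isSeqClosed_iff_isClosed]
    intro z z₀ hz hlim
    have key : ∀ n, ‖U z₀ - z₀‖ ≤ 2 * ‖z n - z₀‖ := by
      intro n
      calc ‖U z₀ - z₀‖ ≤ ‖U z₀ - z n‖ + ‖z n - z₀‖ := norm_sub_le_norm_sub_add_norm_sub _ _ _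
        _ ≤ ‖z₀ - z n‖ + ‖z n - z₀‖ := by
              have := hqne z₀ (z n) (hz n); linarith
        _ = 2 * ‖z n - z₀‖ := by rw [norm_sub_rev]; ring
    have h2 : Tendsto (fun n => 2 * ‖z n - z₀‖) atTop (nhds 0) := by
      have h0 : Tendsto (fun n => z n - z₀) atTop (nhds 0) := tendsto_sub_nhds_zero_iff.mpr hlim
      have : Tendsto (fun n => ‖z n - z₀‖) atTop (nhds 0) := by simpa using h0.norm
      simpa using this.const_mul 2
    have : ‖U z₀ - z₀‖ ≤ 0 :=
      le_of_tendsto_of_tendsto' tendsto_const_nhds h2 key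
    have : U z₀ - z₀ = 0 := by
      have := norm_nonneg (U z₀ - z₀); have := norm_eq_zero.mp (le_antisymm ‹_› ‹_›)
      exact this
    exact sub_eq_zero.mp this
  -- S is convex
  have hSconvex : Convex ℝ S := by
    intro u hu v hv a b ha hb hab
    have hb' : b = 1 - a := by linarith
    subst hb'
    set w := a • u + (1 - a) • v
    have h1 : ‖U w - u‖ ≤ ‖w - u‖ := hqne w u hu
    have h2 : ‖U w - v‖ ≤ ‖w - v‖ := hqne w v hv
    have hwu : ‖w - u‖ ^ 2 = (1 - a) ^ 2 * ‖u - v‖ ^ 2 := by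
      have : w - u = (1 - a) • (v - u) := by
        simp only [w]; module
      rw [this, norm_smul, mul_pow, Real.norm_eq_abs, sq_abs, norm_sub_rev]
    have hwv : ‖w - v‖ ^ 2 = a ^ 2 * ‖u - v‖ ^ 2 := by
      have : w - v = a • (u - v) := by
        simp only [w]; module
      rw [this, norm_smul, mul_pow, Real.norm_eq_abs, sq_abs]
    have hid := aux_convex_identity u v (U w) a
    have hUw : ‖U w - w‖ ^ 2 ≤ 0 := by
      rw [hid]
      have hA : ‖U w - u‖ ^ 2 ≤ ‖w - u‖ ^ 2 := by
        nlinarith [norm_nonneg (U w - u), norm_nonneg (w - u)]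
      have hB : ‖U w - v‖ ^ 2 ≤ ‖w - v‖ ^ 2 := by
        nlinarith [norm_nonneg (U w - v), norm_nonneg (w - v)]
      nlinarith [mul_le_mul_of_nonneg_left hA ha, mul_le_mul_of_nonneg_left hB hb]
    have : U w = w := by
      have h0 : ‖U w - w‖ ^ 2 ≥ 0 := sq_nonneg _
      have : ‖U w - w‖ = 0 := by nlinarith [norm_nonneg (U w - w)]
      exact sub_eq_zero.mp (norm_eq_zero.mp this)
    exact this
  -- x is bounded (Banach-Steinhaus)
  have hbdd : Bornology.IsBounded (Set.range x) := by
    have hpt : ∀ y : H, ∃ C, ∀ k, ‖(innerSL ℝ (x k)) y‖ ≤ C := by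
      intro y
      have := Metric.isBounded_range_of_tendsto _ (hweak y)
      rw [Metric.isBounded_iff_subset_closedBall 0] at this
      obtain ⟨C, hC⟩ := this
      refine ⟨C, fun k => ?_⟩
      have := hC (Set.mem_range_self k)
      simp only [Metric.mem_closedBall, Real.dist_eq, sub_zero] at this
      simpa [real_inner_comm] using this
    obtain ⟨C, hC⟩ := banach_steinhaus hpt
    rw [Metric.isBounded_iff_subset_closedBall 0]
    refine ⟨C, ?_⟩
    rintro _ ⟨k, rfl⟩
    have := hC k
    rw [innerSL_apply_norm] at this
    simpa [Metric.mem_closedBall, dist_eq_norm] using this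
  -- residual norms tend to 0
  have hresn : Tendsto (fun k => ‖U (x k) - x k‖) atTop (nhds 0) := by
    simpa using hres.norm
  -- apply bounded regularity
  have hdist := hBR x hbdd hresn
  -- pick near-minimizers z k ∈ S
  have hsel : ∀ k : ℕ, ∃ z ∈ S, dist (x k) z < Metric.infDist (x k) S + (1 / (k + 1) : ℝ) := by
    intro k
    rw [← Metric.infDist_lt_iff hSne]
    have : (0 : ℝ) < 1 / (k + 1) := by positivity
    linarith
  choose z hzS hzlt using hsel
  have hzlim : Tendsto (fun k => dist (x k) (z k)) atTop (nhds 0) := by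
    apply squeeze_zero (fun k => dist_nonneg) (fun k => le_of_lt (hzlt k))
    have := hdist.add tendsto_one_div_add_atTop_nhds_zero_nat
    simpa using this
  -- projection of p onto S
  obtain ⟨q, hqS, hq⟩ := exists_norm_eq_iInf_of_complete_convex hSne
    (hSclosed.isComplete) hSconvex p
  have hproj : ∀ w ∈ S, ⟪p - q, w - q⟫ ≤ 0 :=
    (norm_eq_iInf_iff_real_inner_le_zero hSconvex hqS).mp hq
  -- the sequence g k = ⟪p - q, x k - q⟫ tends to ‖p - q‖²
  have hg : Tendsto (fun k => ⟪p - q, x k - q⟫) atTop (nhds (‖p - q‖ ^ 2)) := by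
    have h1 := (hweak (p - q)).sub_const ⟪p - q, q⟫
    have h2 : ⟪p - q, p⟫ - ⟪p - q, q⟫ = ‖p - q‖ ^ 2 := by
      rw [← inner_sub_right, real_inner_self_eq_norm_sq]
    rw [h2] at h1
    refine h1.congr fun k => ?_
    rw [inner_sub_right]
  -- upper bound tending to 0
  have hub : ∀ k, ⟪p - q, x k - q⟫ ≤ ‖p - q‖ * dist (x k) (z k) := by
    intro k
    have hsplit : (x k) - q = ((x k) - z k) + (z k - q) := by abel
    rw [hsplit, inner_add_right]
    have h1 : ⟪p - q, x k - z k⟫ ≤ ‖p - q‖ * ‖x k - z k‖ := real_inner_le_norm _ _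
    have h2 : ⟪p - q, z k - q⟫ ≤ 0 := hproj (z k) (hzS k)
    rw [dist_eq_norm]
    linarith
  have hub_lim : Tendsto (fun k => ‖p - q‖ * dist (x k) (z k)) atTop (nhds 0) := by
    simpa using hzlim.const_mul ‖p - q‖
  have hle : ‖p - q‖ ^ 2 ≤ 0 := le_of_tendsto_of_tendsto' hg hub_lim hub
  have hpq : p = q := by
    have : ‖p - q‖ = 0 := by nlinarith [norm_nonneg (p - q), sq_nonneg ‖p - q‖]
    exact sub_eq_zero.mp (norm_eq_zero.mp this)
  rw [hpq]; exact hqS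
end

section
/- Let U : ℝⁿ → ℝⁿ be quasi-nonexpansive and weakly regular (U − Id demi-closed at 0). Then U is boundedly regular: for every bounded sequence {x^k} with ‖Ux^k − x^k‖ → 0, we have d(x^k, Fix U) → 0. -/
open Filter

theorem weaklyRegular_implies_boundedlyRegular_finiteDim
    {n : ℕ} (U : EuclideanSpace ℝ (Fin n) → EuclideanSpace ℝ (Fin n))
    (hfix : ∃ z, U z = z)
    (hqne : ∀ x z, U z = z → ‖U x - z‖ ≤ ‖x - z‖)
    (hWR : ∀ (y : ℕ → EuclideanSpace ℝ (Fin n)) (p : EuclideanSpace ℝ (Fin n)),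
      Tendsto y atTop (nhds p) →
      Tendsto (fun k => U (y k) - y k) atTop (nhds 0) →
      U p = p) :
    ∀ x : ℕ → EuclideanSpace ℝ (Fin n), Bornology.IsBounded (Set.range x) →
      Tendsto (fun k => ‖U (x k) - x k‖) atTop (nhds 0) →
      Tendsto (fun k => Metric.infDist (x k) {z | U z = z}) atTop (nhds 0) := by
  intro x hbd hres
  apply tendsto_of_subseq_tendsto
  intro ns hns
  have hcomp : IsCompact (closure (Set.range x)) :=
    Metric.isCompact_of_isClosed_isBounded isClosed_closure hbd.closure
  have hmem : ∀ k, x (ns k) ∈ closure (Set.range x) := fun k =>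
    subset_closure (Set.mem_range_self _)
  obtain ⟨p, _, φ, hφ, hconv⟩ := hcomp.tendsto_subseq hmem
  have hres' : Tendsto (fun k => U (x (ns (φ k))) - x (ns (φ k))) atTop (nhds 0) := by
    rw [tendsto_zero_iff_norm_tendsto_zero]
    exact hres.comp (hns.comp hφ.tendsto_atTop)
  have hfixp : U p = p := hWR (fun k => x (ns (φ k))) p hconv hres'
  refine ⟨φ, squeeze_zero (g := fun k => dist (x (ns (φ k))) p)
    (fun k => Metric.infDist_nonneg)
    (fun k => Metric.infDist_le_dist_of_mem (by exact hfixp))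
    (tendsto_iff_dist_tendsto_zero.mp hconv)⟩
end

section
/- Let C_i ⊆ H, i = 1,…,m, be closed convex sets in a real Hilbert space with C := ⋂_i C_i ≠ ∅. If the interior of C is nonempty, then the family {C_i} is boundedly regular: for every bounded sequence {x^k}, max_i d(x^k, C_i) → 0 implies d(x^k, C) → 0. -/
/-!
If the ball `B(c, ρ)` lies in every `C i` and `x` is within `ε` of each `C i`, say `‖x - zᵢ‖ < ε`
with `zᵢ ∈ C i`, then `c + ρ / (ρ + ε) • (x - c)` is a convex combination of `zᵢ` and the point
`c + (ρ / ε) • (x - zᵢ)` of the ball, hence lies in every `C i`. This gives the linear error bound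
`d(x, ⋂ C i) ≤ (ε / ρ) ‖x - c‖`, which is uniform on bounded sets.
-/

open Filter Metric

section
variable {E : Type*} [SeminormedAddCommGroup E] [NormedSpace ℝ E]

theorem Convex.add_smul_sub_mem_of_ball_subset {s : Set E} (hs : Convex ℝ s) {c x z : E}
    {ρ ε : ℝ} (hρ : 0 < ρ) (hε : 0 < ε) (hball : ball c ρ ⊆ s) (hz : z ∈ s)
    (hxz : dist x z < ε) : c + (ρ / (ρ + ε)) • (x - c) ∈ s := by
  set t := ρ / (ρ + ε)
  set w := c + (ρ / ε) • (x - z)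
  have hw : w ∈ s := hball <|
    calc dist w c = ρ / ε * dist x z := by
          simp only [w, dist_eq_norm, add_sub_cancel_left, norm_smul,
            Real.norm_of_nonneg (div_pos hρ hε).le]
      _ < ρ / ε * ε := by gcongr
      _ = ρ := div_mul_cancel₀ ρ hε.ne'
  have ht : t ∈ Set.Icc (0 : ℝ) 1 :=
    ⟨by positivity, (div_le_one (by positivity)).2 (by linarith)⟩
  have hcoeff : ρ / ε - t * (ρ / ε) = t := by
    simp only [t]; field_simp; ring
  convert hs.add_smul_sub_mem hw hz ht using 1
  linear_combination (norm := module) hcoeff • (z - x)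

theorem infDist_iInter_le_of_ball_subset {ι : Type*} {C : ι → Set E} (hC : ∀ i, Convex ℝ (C i))
    {c x : E} {ρ ε : ℝ} (hρ : 0 < ρ) (hε : 0 < ε) (hball : ball c ρ ⊆ ⋂ i, C i)
    (hx : ∀ i, infDist x (C i) < ε) : infDist x (⋂ i, C i) ≤ ε * dist x c / ρ := by
  have hmem : c + (ρ / (ρ + ε)) • (x - c) ∈ ⋂ i, C i := Set.mem_iInter.2 fun i => by
    have hc : c ∈ C i := Set.mem_iInter.1 (hball (mem_ball_self hρ)) i
    obtain ⟨z, hz, hxz⟩ := (infDist_lt_iff ⟨c, hc⟩).1 (hx i)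
    exact (hC i).add_smul_sub_mem_of_ball_subset hρ hε
      (hball.trans (Set.iInter_subset _ i)) hz hxz
  calc infDist x (⋂ i, C i) ≤ dist x (c + (ρ / (ρ + ε)) • (x - c)) := infDist_le_dist_of_mem hmem
    _ = ε / (ρ + ε) * dist x c := by
        have h : x - (c + (ρ / (ρ + ε)) • (x - c)) = (ε / (ρ + ε)) • (x - c) := by
          rw [show ε / (ρ + ε) = 1 - ρ / (ρ + ε) by field_simp; ring]
          module
        rw [dist_eq_norm, dist_eq_norm, h, norm_smul, Real.norm_of_nonneg (by positivity)]
    _ ≤ ε * dist x c / ρ := by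
        rw [div_mul_eq_mul_div]
        gcongr
        linarith

theorem infDist_iInter_le_of_ball_subset_of_le {ι : Type*} {C : ι → Set E}
    (hC : ∀ i, Convex ℝ (C i)) {c x : E} {ρ δ : ℝ} (hρ : 0 < ρ) (hδ : 0 ≤ δ)
    (hball : ball c ρ ⊆ ⋂ i, C i) (hx : ∀ i, infDist x (C i) ≤ δ) :
    infDist x (⋂ i, C i) ≤ δ * dist x c / ρ := by
  have hlim : Tendsto (fun ε => ε * dist x c / ρ) (nhdsWithin δ (Set.Ioi δ))
      (nhds (δ * dist x c / ρ)) :=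
    ((continuous_id.mul_const _).div_const _).continuousWithinAt.tendsto
  refine ge_of_tendsto hlim (eventually_nhdsWithin_of_forall fun ε (hε : δ < ε) => ?_)
  exact infDist_iInter_le_of_ball_subset hC hρ (hδ.trans_lt hε) hball fun i => (hx i).trans_lt hε
end

theorem interior_nonempty_implies_boundedlyRegular_general
    {H : Type*} [NormedAddCommGroup H] [InnerProductSpace ℝ H]
    {m : ℕ} [NeZero m] (C : Fin m → Set H)
    (hconv : ∀ i, Convex ℝ (C i))
    (hint : (interior (⋂ i, C i)).Nonempty) :
    ∀ x : ℕ → H, Bornology.IsBounded (Set.range x) →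
      Tendsto (fun k =>
        Finset.univ.sup' Finset.univ_nonempty (fun i => Metric.infDist (x k) (C i)))
        atTop (nhds 0) →
      Tendsto (fun k => Metric.infDist (x k) (⋂ i, C i)) atTop (nhds 0) := by
  intro x hbd htend
  obtain ⟨c, hc⟩ := hint
  obtain ⟨ρ, hρ, hball⟩ := isOpen_iff.1 isOpen_interior c hc
  obtain ⟨r, hr⟩ := hbd.subset_closedBall c
  set δ := fun k => Finset.univ.sup' Finset.univ_nonempty (fun i => infDist (x k) (C i))
  have hδ : ∀ k i, infDist (x k) (C i) ≤ δ k := fun k i =>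
    Finset.le_sup' (fun i => infDist (x k) (C i)) (Finset.mem_univ i)
  have hbound : ∀ k, infDist (x k) (⋂ i, C i) ≤ δ k * r / ρ := fun k => by
    have hδ0 : 0 ≤ δ k := infDist_nonneg.trans (hδ k 0)
    calc infDist (x k) (⋂ i, C i) ≤ δ k * dist (x k) c / ρ :=
          infDist_iInter_le_of_ball_subset_of_le hconv hρ hδ0
            (hball.trans interior_subset) (hδ k)
      _ ≤ δ k * r / ρ := by gcongr; exact hr ⟨k, rfl⟩
  refine squeeze_zero (fun k => infDist_nonneg) hbound ?_
  simpa using (htend.mul_const r).div_const ρ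

theorem interior_nonempty_implies_boundedlyRegular
    {H : Type*} [NormedAddCommGroup H] [InnerProductSpace ℝ H] [CompleteSpace H]
    {m : ℕ} [NeZero m] (C : Fin m → Set H)
    (hclosed : ∀ i, IsClosed (C i)) (hconv : ∀ i, Convex ℝ (C i))
    (hint : (interior (⋂ i, C i)).Nonempty) :
    ∀ x : ℕ → H, Bornology.IsBounded (Set.range x) →
      Tendsto (fun k =>
        Finset.univ.sup' Finset.univ_nonempty (fun i => Metric.infDist (x k) (C i)))
        atTop (nhds 0) →
      Tendsto (fun k => Metric.infDist (x k) (⋂ i, C i)) atTop (nhds 0) :=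
  interior_nonempty_implies_boundedlyRegular_general C hconv hint
end

section
/- Let C_i ⊆ ℝⁿ, i = 1,…,m, be closed convex sets with C := ⋂_i C_i ≠ ∅. Then the family {C_i} is boundedly regular: for every bounded sequence {x^k} ⊆ ℝⁿ, max_i d(x^k, C_i) → 0 implies d(x^k, C) → 0. -/
open Filter

theorem finiteDim_family_boundedlyRegular
    {n : ℕ} {m : ℕ} [NeZero m] (C : Fin m → Set (EuclideanSpace ℝ (Fin n)))
    (hclosed : ∀ i, IsClosed (C i)) (hconv : ∀ i, Convex ℝ (C i))
    (hne : (⋂ i, C i).Nonempty) :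
    ∀ x : ℕ → EuclideanSpace ℝ (Fin n), Bornology.IsBounded (Set.range x) →
      Tendsto (fun k =>
        Finset.univ.sup' Finset.univ_nonempty (fun i => Metric.infDist (x k) (C i)))
        atTop (nhds 0) →
      Tendsto (fun k => Metric.infDist (x k) (⋂ i, C i)) atTop (nhds 0) := by
  intro x hbdd hsup
  have hi : ∀ i, Tendsto (fun k => Metric.infDist (x k) (C i)) atTop (nhds 0) := by
    intro i
    refine squeeze_zero (fun k => Metric.infDist_nonneg) (fun k => ?_) hsup
    exact Finset.le_sup' (fun j => Metric.infDist (x k) (C j)) (Finset.mem_univ i)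
  apply Filter.tendsto_of_subseq_tendsto
  intro ns hns
  obtain ⟨a, -, φ, hφ, hconv2⟩ :=
    tendsto_subseq_of_bounded hbdd (fun k => Set.mem_range_self (ns k))
  have haC : a ∈ ⋂ i, C i := by
    rw [Set.mem_iInter]
    intro i
    have hnei : (C i).Nonempty := by
      obtain ⟨z, hz⟩ := hne
      exact ⟨z, Set.mem_iInter.mp hz i⟩
    rw [(hclosed i).mem_iff_infDist_zero hnei]
    have h1 : Tendsto (fun k => Metric.infDist (x (ns (φ k))) (C i)) atTop (nhds 0) :=
      (hi i).comp (hns.comp hφ.tendsto_atTop)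
    have h2 : Tendsto (fun k => Metric.infDist (x (ns (φ k))) (C i)) atTop
        (nhds (Metric.infDist a (C i))) :=
      ((Metric.continuous_infDist_pt (C i)).continuousAt.tendsto).comp hconv2
    exact tendsto_nhds_unique h2 h1
  refine ⟨φ, ?_⟩
  have hd : Tendsto (fun k => dist (x (ns (φ k))) a) atTop (nhds 0) :=
    tendsto_iff_dist_tendsto_zero.mp hconv2
  exact squeeze_zero (fun k => Metric.infDist_nonneg)
    (fun k => Metric.infDist_le_dist_of_mem haC) hd
end

section
/- Let f_i : ℝⁿ → ℝ, i ∈ I finite, be convex functions with nonempty sublevel sets S(f_i, 0) := {x : f_i(x) ≤ 0}, let P_{f_i} denote subgradient projections, and let {i_k} ⊆ I. Then for every bounded sequence {y^k} ⊆ ℝⁿ, the following are equivalent: (a) ‖P_{f_{i_k}} y^k − y^k‖ → 0; (b) f_{i_k}⁺(y^k) → 0; (c) d(y^k, S(f_{i_k}, 0)) → 0, where f⁺ := max{f, 0}. -/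
open RealInnerProductSpace Filter Classical

lemma aux_le_infDist' {α : Type*} [MetricSpace α] {s : Set α} (hs : s.Nonempty) {x : α} {c : ℝ}
    (h : ∀ z ∈ s, c ≤ dist x z) : c ≤ Metric.infDist x s :=
  le_of_not_gt fun hlt => by
    obtain ⟨z, hz, hd⟩ := (Metric.infDist_lt_iff hs).1 hlt
    exact absurd hd (not_lt.2 (h z hz))

theorem subgradientProjection_regularity_equivalences
    {n : ℕ} {ι : Type*} [Fintype ι]
    (f : ι → EuclideanSpace ℝ (Fin n) → ℝ)
    (hconv : ∀ i, ConvexOn ℝ Set.univ (f i))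
    (hlev : ∀ i, ∃ x, f i x ≤ 0)
    (g : ι → EuclideanSpace ℝ (Fin n) → EuclideanSpace ℝ (Fin n))
    (hg : ∀ i x y, ⟪g i x, y - x⟫ ≤ f i y - f i x)
    (P : ι → EuclideanSpace ℝ (Fin n) → EuclideanSpace ℝ (Fin n))
    (hP : ∀ i x, P i x =
      if 0 < f i x then x - (f i x / ‖g i x‖ ^ 2) • g i x else x)
    (idx : ℕ → ι)
    (y : ℕ → EuclideanSpace ℝ (Fin n)) (hy : Bornology.IsBounded (Set.range y)) :
    (Tendsto (fun k => ‖P (idx k) (y k) - y k‖) atTop (nhds 0) ↔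
      Tendsto (fun k => max (f (idx k) (y k)) 0) atTop (nhds 0)) ∧
    (Tendsto (fun k => max (f (idx k) (y k)) 0) atTop (nhds 0) ↔
      Tendsto (fun k => Metric.infDist (y k) {z | f (idx k) z ≤ 0}) atTop (nhds 0)) := by
  classical
  -- continuity of each f i
  have hcont : ∀ i, Continuous (f i) := fun i => (hconv i).locallyLipschitz.continuous
  -- nonempty sublevel sets
  have hSne : ∀ i, ({z : EuclideanSpace ℝ (Fin n) | f i z ≤ 0}).Nonempty := fun i => hlev i
  -- bounding ball
  obtain ⟨R, hR⟩ := hy.subset_closedBall 0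
  have hyK : ∀ k, y k ∈ Metric.closedBall (0 : EuclideanSpace ℝ (Fin n)) R := fun k => hR (Set.mem_range_self k)
  have hR0 : 0 ≤ R := le_trans dist_nonneg (Metric.mem_closedBall.1 (hyK 0))
  -- bound on |f i| on the ball of radius R+1
  have hbf : ∀ i : ι, ∃ C, ∀ x ∈ Metric.closedBall (0 : EuclideanSpace ℝ (Fin n)) (R + 1), |f i x| ≤ C := fun i =>
    (isCompact_closedBall _ _).exists_bound_of_continuousOn (hcont i).continuousOn
  choose C hC using hbf
  have h0K : (0 : EuclideanSpace ℝ (Fin n)) ∈ Metric.closedBall (0 : EuclideanSpace ℝ (Fin n)) (R + 1) := by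
    simp [Metric.mem_closedBall]; linarith
  have hC0 : ∀ i, 0 ≤ C i := fun i => le_trans (abs_nonneg _) (hC i 0 h0K)
  -- bound on subgradient norms on the ball of radius R
  have hgb : ∀ i, ∀ x ∈ Metric.closedBall (0 : EuclideanSpace ℝ (Fin n)) R, ‖g i x‖ ≤ 2 * C i := by
    intro i x hx
    have hxK : x ∈ Metric.closedBall (0 : EuclideanSpace ℝ (Fin n)) (R + 1) :=
      Metric.closedBall_subset_closedBall (by linarith) hx
    rcases eq_or_ne (g i x) 0 with h0 | h0
    · rw [h0, norm_zero]; linarith [hC0 i]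
    · set u : EuclideanSpace ℝ (Fin n) := ‖g i x‖⁻¹ • g i x with hu
      have hun : ‖u‖ = 1 := norm_smul_inv_norm h0
      have hxu : x + u ∈ Metric.closedBall (0 : EuclideanSpace ℝ (Fin n)) (R + 1) := by
        rw [Metric.mem_closedBall, dist_zero_right]
        calc ‖x + u‖ ≤ ‖x‖ + ‖u‖ := norm_add_le _ _
          _ ≤ R + 1 := by
            have := Metric.mem_closedBall.1 hx
            rw [dist_zero_right] at this
            linarith [hun.le]
      have h1 := hg i x (x + u)
      have h2 : ⟪g i x, (x + u) - x⟫ = ‖g i x‖ := by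
        rw [add_sub_cancel_left, hu, real_inner_smul_right, real_inner_self_eq_norm_sq, sq]
        field_simp
      rw [h2] at h1
      have hf1 := hC i (x + u) hxu
      have hf2 := hC i x hxK
      have := abs_le.1 hf1
      have := abs_le.1 hf2
      linarith [h1]
  -- global bound M
  haveI hιne : Nonempty ι := ⟨idx 0⟩
  set M : ℝ := Finset.univ.sup' (Finset.univ_nonempty) (fun i => 2 * C i) with hMdef
  have hM1 : (0 : ℝ) < M + 1 := by
    have : 2 * C (idx 0) ≤ M := Finset.le_sup' (fun i => 2 * C i) (Finset.mem_univ _)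
    have := hC0 (idx 0)
    linarith
  have hMk : ∀ k, ‖g (idx k) (y k)‖ ≤ M + 1 := fun k => by
    have h1 := hgb (idx k) (y k) (hyK k)
    have h2 : 2 * C (idx k) ≤ M := Finset.le_sup' (fun i => 2 * C i) (Finset.mem_univ _)
    linarith
  -- subgradients nonzero where f positive
  have gnz : ∀ i (x : EuclideanSpace ℝ (Fin n)), 0 < f i x → g i x ≠ 0 := by
    intro i x hfx h0
    obtain ⟨z, hz⟩ := hlev i
    have h1 := hg i x z
    rw [h0, inner_zero_left] at h1
    linarith
  -- distance formula for the projection step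
  have Pdist : ∀ i x, 0 < f i x → ‖P i x - x‖ = f i x / ‖g i x‖ := by
    intro i x hfx
    have hgpos : 0 < ‖g i x‖ := norm_pos_iff.2 (gnz i x hfx)
    rw [hP i x, if_pos hfx, sub_sub_cancel_left, norm_neg, norm_smul, Real.norm_eq_abs,
      abs_of_pos (div_pos hfx (pow_pos hgpos 2)), sq]
    field_simp
  -- cutter property: step is at most the distance to the sublevel set
  have hcut : ∀ i x, ‖P i x - x‖ ≤ Metric.infDist x {z : EuclideanSpace ℝ (Fin n) | f i z ≤ 0} := by
    intro i x
    by_cases hfx : 0 < f i x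
    · rw [Pdist i x hfx]
      have hgpos : 0 < ‖g i x‖ := norm_pos_iff.2 (gnz i x hfx)
      refine aux_le_infDist' (hSne i) fun z hz => ?_
      have hzz : f i z ≤ 0 := hz
      have h1 := hg i x z
      have habs := abs_real_inner_le_norm (g i x) (z - x)
      have hnorm : ‖z - x‖ = dist x z := by rw [dist_eq_norm, norm_sub_rev]
      rw [hnorm] at habs
      have hneg : -⟪g i x, z - x⟫ ≤ |⟪g i x, z - x⟫| := neg_le_abs _
      rw [div_le_iff₀ hgpos]
      have hcm : ‖g i x‖ * dist x z = dist x z * ‖g i x‖ := mul_comm _ _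
      linarith
    · rw [hP i x, if_neg hfx, sub_self, norm_zero]
      exact Metric.infDist_nonneg
  -- Lipschitz-type bound: f⁺ ≤ (M+1) · dist to sublevel set (along the sequence)
  have hfd : ∀ k, max (f (idx k) (y k)) 0
      ≤ (M + 1) * Metric.infDist (y k) {z : EuclideanSpace ℝ (Fin n) | f (idx k) z ≤ 0} := by
    intro k
    have hId : 0 ≤ Metric.infDist (y k) {z : EuclideanSpace ℝ (Fin n) | f (idx k) z ≤ 0} := Metric.infDist_nonneg
    refine max_le ?_ (mul_nonneg hM1.le hId)
    have key : ∀ z ∈ {z : EuclideanSpace ℝ (Fin n) | f (idx k) z ≤ 0}, f (idx k) (y k) / (M + 1) ≤ dist (y k) z := by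
      intro z hz
      have hzz : f (idx k) z ≤ 0 := hz
      have h1 := hg (idx k) (y k) z
      have habs := abs_real_inner_le_norm (g (idx k) (y k)) (z - y k)
      have hnorm : ‖z - y k‖ = dist (y k) z := by rw [dist_eq_norm, norm_sub_rev]
      rw [hnorm] at habs
      have hneg : -⟪g (idx k) (y k), z - y k⟫ ≤ |⟪g (idx k) (y k), z - y k⟫| := neg_le_abs _
      have hgk := hMk k
      have hd0 : (0 : ℝ) ≤ dist (y k) z := dist_nonneg
      rw [div_le_iff₀ hM1]
      nlinarith [mul_le_mul_of_nonneg_right hgk hd0]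
    have h2 := aux_le_infDist' (hSne (idx k)) key
    have := (div_le_iff₀ hM1).1 h2
    linarith
  -- f⁺ ≤ (M+1) · step length (along the sequence)
  have hfP : ∀ k, max (f (idx k) (y k)) 0 ≤ (M + 1) * ‖P (idx k) (y k) - y k‖ := by
    intro k
    by_cases hfx : 0 < f (idx k) (y k)
    · rw [Pdist _ _ hfx, max_eq_left hfx.le, ← mul_div_assoc, le_div_iff₀
        (norm_pos_iff.2 (gnz _ _ hfx))]
      nlinarith [hMk k, hfx]
    · push_neg at hfx
      rw [hP (idx k) (y k), if_neg (not_lt.2 hfx), sub_self, norm_zero, mul_zero]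
      exact max_le hfx le_rfl
  -- key compactness claim for (b) ⇒ (c)
  have claim : ∀ (i : ι), ∀ ε > (0 : ℝ), ∃ δ > (0 : ℝ), ∀ x ∈ Metric.closedBall (0 : EuclideanSpace ℝ (Fin n)) R,
      max (f i x) 0 < δ → Metric.infDist x {z : EuclideanSpace ℝ (Fin n) | f i z ≤ 0} < ε := by
    intro i ε hε
    set S : Set (EuclideanSpace ℝ (Fin n)) := {z : EuclideanSpace ℝ (Fin n) | f i z ≤ 0} with hS
    set A : Set (EuclideanSpace ℝ (Fin n)) := Metric.closedBall (0 : EuclideanSpace ℝ (Fin n)) R ∩ {x | ε ≤ Metric.infDist x S} with hA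
    have hAc : IsCompact A := (isCompact_closedBall _ _).inter_right
      (isClosed_le continuous_const (Metric.continuous_infDist_pt S))
    rcases A.eq_empty_or_nonempty with hAe | hAne
    · refine ⟨1, one_pos, fun x hx _ => ?_⟩
      by_contra h
      push_neg at h
      have hmem : x ∈ A := ⟨hx, h⟩
      rw [hAe] at hmem
      exact absurd hmem (Set.notMem_empty x)
    · obtain ⟨a, haA, ha⟩ := hAc.exists_isMinOn hAne (hcont i).continuousOn
      have hfa : 0 < f i a := by
        by_contra h
        push_neg at h
        have h1 : Metric.infDist a S = 0 := Metric.infDist_zero_of_mem h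
        have h2 : ε ≤ Metric.infDist a S := haA.2
        linarith
      refine ⟨f i a, hfa, fun x hx hmax => ?_⟩
      by_contra h
      push_neg at h
      have hxA : x ∈ A := ⟨hx, h⟩
      have h1 : f i a ≤ f i x := ha hxA
      have h2 : f i x ≤ max (f i x) 0 := le_max_left _ _
      linarith
  -- (b) ⇒ (c)
  have hbc : Tendsto (fun k => max (f (idx k) (y k)) 0) atTop (nhds 0) →
      Tendsto (fun k => Metric.infDist (y k) {z : EuclideanSpace ℝ (Fin n) | f (idx k) z ≤ 0}) atTop (nhds 0) := by
    intro hb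
    rw [Metric.tendsto_atTop]
    intro ε hε
    choose δ hδpos hδ using fun i => claim i ε hε
    set δ0 : ℝ := Finset.univ.inf' (Finset.univ_nonempty) δ with hδ0
    have hδ0pos : 0 < δ0 := (Finset.lt_inf'_iff _).2 fun i _ => hδpos i
    obtain ⟨N, hN⟩ := (Metric.tendsto_atTop.1 hb) δ0 hδ0pos
    refine ⟨N, fun k hk => ?_⟩
    have h1 := hN k hk
    rw [Real.dist_eq, sub_zero, abs_of_nonneg (le_max_right _ _)] at h1
    have h2 : δ0 ≤ δ (idx k) := Finset.inf'_le _ (Finset.mem_univ _)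
    have h3 := hδ (idx k) (y k) (hyK k) (lt_of_lt_of_le h1 h2)
    rw [Real.dist_eq, sub_zero, abs_of_nonneg Metric.infDist_nonneg]
    exact h3
  -- assemble
  have hab : Tendsto (fun k => ‖P (idx k) (y k) - y k‖) atTop (nhds 0) →
      Tendsto (fun k => max (f (idx k) (y k)) 0) atTop (nhds 0) := fun ha =>
    squeeze_zero (fun k => le_max_right _ _) hfP (by simpa using ha.const_mul (M + 1))
  refine ⟨⟨hab, fun hb => squeeze_zero (fun k => norm_nonneg _)
      (fun k => hcut (idx k) (y k)) (hbc hb)⟩,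
    ⟨hbc, fun hc => squeeze_zero (fun k => le_max_right _ _) hfd
      (by simpa using hc.const_mul (M + 1))⟩⟩
end
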